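/- arXiv:1507.01431 — 2 statements merged into one kernel-verified Lean document; each statement's English description precedes it below -/
import Mathlib

section
/- For every 2-homogeneous polynomial P(x,y) = a·x² + b·xy + c·y² with real coefficients and every q ≥ 2, one has (|a|^q + |b|^q + |c|^q)^{1/q} ≤ 2^{1/q} · ‖P‖_∞, where ‖P‖_∞ = sup{|P(x,y)| : |x| ≤ 1, |y| ≤ 1}, and the constant 2^{1/q} is optimal. -/
/-!
Write `M` for a bound of `|P|` on the square. For `q = 2` the estimate `a² + b² + c² ≤ 2 M²`
comes from evaluating `P` at the corners of the square and, when `ac < 0` and the vertices of the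
parabolas `t ↦ P(t, 1)` and `t ↦ P(1, t)` lie in `[-1, 1]`, at those vertices; the two vertex
bounds are then combined by AM-GM. Since every coefficient is itself bounded by `M`, the
interpolation `|r|^q ≤ M^(q-2) r²` passes from `q = 2` to every `q ≥ 2`. The form `x² - y²`
attains the bound.
-/

/-- Sup norm of `a·x² + b·xy + c·y²` over the unit ball of `ℓ∞²`. -/
noncomputable def supNormInf (a b c : ℝ) : ℝ :=
  sSup {z : ℝ | ∃ x y : ℝ, |x| ≤ 1 ∧ |y| ≤ 1 ∧ z = |a * x ^ 2 + b * x * y + c * y ^ 2|}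

open Real

theorem abs_quadraticForm_le_sum_abs (a b c : ℝ) {x y : ℝ} (hx : |x| ≤ 1) (hy : |y| ≤ 1) :
    |a * x ^ 2 + b * x * y + c * y ^ 2| ≤ |a| + |b| + |c| :=
  calc |a * x ^ 2 + b * x * y + c * y ^ 2|
      ≤ |a| * |x| ^ 2 + |b| * |x| * |y| + |c| * |y| ^ 2 := by
        have := abs_add_three (a * x ^ 2) (b * x * y) (c * y ^ 2)
        rwa [abs_mul, abs_mul, abs_mul, abs_mul, abs_pow, abs_pow] at this
    _ ≤ |a| * 1 ^ 2 + |b| * 1 * 1 + |c| * 1 ^ 2 := by gcongr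
    _ = |a| + |b| + |c| := by ring

theorem abs_le_supNormInf (a b c : ℝ) {x y : ℝ} (hx : |x| ≤ 1) (hy : |y| ≤ 1) :
    |a * x ^ 2 + b * x * y + c * y ^ 2| ≤ supNormInf a b c :=
  le_csSup ⟨|a| + |b| + |c|, by
    rintro z ⟨x, y, hx, hy, rfl⟩
    exact abs_quadraticForm_le_sum_abs a b c hx hy⟩ ⟨x, y, hx, hy, rfl⟩

theorem supNormInf_one_zero_neg_one : supNormInf 1 0 (-1) = 1 := by
  refine le_antisymm (Real.sSup_le ?_ zero_le_one) ?_
  · rintro z ⟨x, y, hx, hy, rfl⟩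
    have hx2 : x ^ 2 ≤ 1 := by nlinarith [sq_abs x, abs_nonneg x]
    have hy2 : y ^ 2 ≤ 1 := by nlinarith [sq_abs y, abs_nonneg y]
    rw [abs_le]
    constructor <;> nlinarith [sq_nonneg x, sq_nonneg y]
  · simpa using abs_le_supNormInf 1 0 (-1) (x := 1) (y := 0) (by norm_num) (by norm_num)

/-- At its vertex `-β / (2α)` the parabola takes the value `γ - β² / (4α)`. -/
theorem sq_le_of_abs_quadratic_le {α β γ M : ℝ} (hα : 0 < α) (hβ : |β| ≤ 2 * α)
    (h : ∀ t : ℝ, |t| ≤ 1 → |α * t ^ 2 + β * t + γ| ≤ M) :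
    β ^ 2 ≤ 4 * α * (M + γ) := by
  have hvertex : |-β / (2 * α)| ≤ 1 := by
    rw [abs_div, abs_neg, abs_of_pos (by positivity : 0 < 2 * α), div_le_one (by positivity)]
    exact hβ
  have hvalue : α * (-β / (2 * α)) ^ 2 + β * (-β / (2 * α)) + γ = γ - β ^ 2 / (4 * α) := by
    field_simp
    ring
  have hlower := (abs_le.mp (h _ hvertex)).1
  rw [hvalue] at hlower
  have : β ^ 2 / (4 * α) ≤ M + γ := by linarith
  rwa [div_le_iff₀ (by positivity), mul_comm] at this

theorem le_two_mul_sq_sub_of_le_of_le {B a g M : ℝ} (hB : 0 ≤ B)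
    (h₁ : B ≤ 4 * a * (M - g)) (h₂ : B ≤ 4 * g * (M - a))
    (hg : 0 ≤ g) (hga : g ≤ a) (haM : a ≤ M) :
    B ≤ 2 * M ^ 2 - a ^ 2 - g ^ 2 := by
  have hprod : B * B ≤ 4 * a * (M - g) * (4 * g * (M - a)) :=
    mul_le_mul h₁ h₂ hB (by nlinarith)
  have hamgm : 4 * a * g ≤ (M + a) * (M + g) := by nlinarith
  have hsq : B ^ 2 ≤ 4 * ((M ^ 2 - a ^ 2) * (M ^ 2 - g ^ 2)) := by
    have : 0 ≤ (M - a) * (M - g) := by nlinarith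
    nlinarith
  nlinarith [sq_nonneg ((M ^ 2 - a ^ 2) - (M ^ 2 - g ^ 2))]

section QuadraticForm

variable {a b c M : ℝ}

theorem abs_middle_coeff_le
    (h : ∀ x y : ℝ, |x| ≤ 1 → |y| ≤ 1 → |a * x ^ 2 + b * x * y + c * y ^ 2| ≤ M) :
    |b| ≤ M := by
  have hpos := h 1 1 (by norm_num) (by norm_num)
  have hneg := h 1 (-1) (by norm_num) (by norm_num)
  norm_num at hpos hneg
  rw [abs_le] at hpos hneg ⊢
  constructor <;> linarith

theorem sum_sq_coeff_le_of_nonneg_of_abs_le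
    (h : ∀ x y : ℝ, |x| ≤ 1 → |y| ≤ 1 → |a * x ^ 2 + b * x * y + c * y ^ 2| ≤ M)
    (hb : 0 ≤ b) (hca : |c| ≤ a) :
    a ^ 2 + b ^ 2 + c ^ 2 ≤ 2 * M ^ 2 := by
  obtain ⟨hac, hca'⟩ := abs_le.mp hca
  have haM : a ≤ M := by simpa using (abs_le.mp (h 1 0 (by norm_num) (by norm_num))).2
  have hbM : b ≤ M := (abs_le.mp (abs_middle_coeff_le h)).2
  have hcorner : a + b + c ≤ M := by simpa using (abs_le.mp (h 1 1 (by norm_num) (by norm_num))).2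
  rcases le_or_gt 0 c with hc | hc
  · nlinarith [mul_nonneg hb hc, mul_nonneg (hc.trans hca') hb, mul_nonneg (hc.trans hca') hc]
  rcases le_or_gt (-2 * c) b with hbc | hbc
  · -- `a² + b² + c² = (a + c)² + b² - 2ac` with `(a + c) + b ≤ M` and `-2ac ≤ ab ≤ M²`
    nlinarith [mul_nonneg (by linarith : 0 ≤ a + c) hb, mul_le_mul haM hbM hb (by linarith)]
  · have hvertex₁ : b ^ 2 ≤ 4 * a * (M + c) :=
      sq_le_of_abs_quadratic_le (by linarith) (by rw [abs_of_nonneg hb]; linarith)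
        fun t ht => by simpa using h t 1 ht (by norm_num)
    have hvertex₂ : (-b) ^ 2 ≤ 4 * (-c) * (M + -a) :=
      sq_le_of_abs_quadratic_le (by linarith) (by rw [abs_neg, abs_of_nonneg hb]; linarith)
        fun t ht => by
          rw [← abs_neg]
          convert h 1 t (by norm_num) ht using 2
          ring
    have := le_two_mul_sq_sub_of_le_of_le (g := -c) (sq_nonneg b) (by linarith) (by linarith)
      (by linarith) (by linarith) haM
    linarith

theorem sum_sq_coeff_le_two_mul_sq
    (h : ∀ x y : ℝ, |x| ≤ 1 → |y| ≤ 1 → |a * x ^ 2 + b * x * y + c * y ^ 2| ≤ M) :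
    a ^ 2 + b ^ 2 + c ^ 2 ≤ 2 * M ^ 2 := by
  wlog hb : 0 ≤ b generalizing b
  · have := this (b := -b) (fun x y hx hy => by
      convert h x (-y) hx (by rwa [abs_neg]) using 2
      ring) (by linarith)
    simpa using this
  wlog hca : |c| ≤ |a| generalizing a c
  · have := this (a := c) (c := a) (fun x y hx hy => by
      convert h y x hy hx using 2
      ring) (le_of_not_ge hca)
    linarith
  wlog ha : 0 ≤ a generalizing a c
  · have := this (a := -a) (c := -c) (fun x y hx hy => by
      rw [← abs_neg]
      convert h (-x) y (by rwa [abs_neg]) hy using 2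
      ring) (by simpa using hca) (by linarith)
    simpa using this
  exact sum_sq_coeff_le_of_nonneg_of_abs_le h hb (abs_of_nonneg ha ▸ hca)

end QuadraticForm

theorem abs_rpow_le_rpow_sub_two_mul_sq {q r M : ℝ} (hq : 2 ≤ q) (hr : |r| ≤ M) :
    |r| ^ q ≤ M ^ (q - 2) * r ^ 2 := by
  have hsplit : |r| ^ q = |r| ^ (q - 2) * r ^ 2 := by
    rw [← sq_abs, ← rpow_natCast, ← rpow_add' (abs_nonneg r) (by push_cast; linarith)]
    norm_num
  rw [hsplit]
  gcongr

theorem sum_abs_rpow_le_two_mul_rpow {q a b c M : ℝ} (hq : 2 ≤ q)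
    (ha : |a| ≤ M) (hb : |b| ≤ M) (hc : |c| ≤ M) (hsq : a ^ 2 + b ^ 2 + c ^ 2 ≤ 2 * M ^ 2) :
    |a| ^ q + |b| ^ q + |c| ^ q ≤ 2 * M ^ q := by
  have hM : 0 ≤ M := (abs_nonneg a).trans ha
  calc |a| ^ q + |b| ^ q + |c| ^ q ≤ M ^ (q - 2) * (a ^ 2 + b ^ 2 + c ^ 2) := by
        have := abs_rpow_le_rpow_sub_two_mul_sq hq ha
        have := abs_rpow_le_rpow_sub_two_mul_sq hq hb
        have := abs_rpow_le_rpow_sub_two_mul_sq hq hc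
        linarith
    _ ≤ M ^ (q - 2) * (2 * M ^ 2) := by gcongr
    _ = 2 * M ^ q := by
        rw [← rpow_natCast, mul_left_comm, ← rpow_add' hM (by push_cast; linarith)]
        norm_num

theorem stmt3 (q : ℝ) (hq : 2 ≤ q) :
    (∀ a b c : ℝ,
      (|a| ^ q + |b| ^ q + |c| ^ q) ^ (1 / q) ≤ (2 : ℝ) ^ (1 / q) * supNormInf a b c) ∧
    (|(1 : ℝ)| ^ q + |(0 : ℝ)| ^ q + |(-1 : ℝ)| ^ q) ^ (1 / q) =
      (2 : ℝ) ^ (1 / q) * supNormInf 1 0 (-1) := by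
  have hq0 : q ≠ 0 := by positivity
  refine ⟨fun a b c => ?_, ?_⟩
  · set M := supNormInf a b c
    have h := fun x y (hx : |x| ≤ 1) (hy : |y| ≤ 1) => abs_le_supNormInf a b c hx hy
    have ha : |a| ≤ M := by simpa using h 1 0 (by norm_num) (by norm_num)
    have hc : |c| ≤ M := by simpa using h 0 1 (by norm_num) (by norm_num)
    have hM : 0 ≤ M := (abs_nonneg a).trans ha
    have hsum := sum_abs_rpow_le_two_mul_rpow hq ha (abs_middle_coeff_le h) hc
      (sum_sq_coeff_le_two_mul_sq h)
    calc (|a| ^ q + |b| ^ q + |c| ^ q) ^ (1 / q) ≤ (2 * M ^ q) ^ (1 / q) := by gcongr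
      _ = 2 ^ (1 / q) * M := by
        rw [mul_rpow zero_le_two (by positivity), ← rpow_mul hM, mul_one_div_cancel hq0, rpow_one]
  · rw [supNormInf_one_zero_neg_one, abs_neg, abs_one, abs_zero, one_rpow, zero_rpow hq0]
    norm_num
end

section
/- For every 2-homogeneous polynomial P(x,y) = a·x² + b·xy + c·y² with real coefficients, max{|a|, |b|, |c|} ≤ 4 · ‖P‖_1, where ‖P‖_1 = sup{|P(x,y)| : |x| + |y| ≤ 1}. The constant 4 is optimal, attained by P(x,y) = 4xy. -/
/-
Evaluating `P` at `(1,0)` and `(0,1)` gives `|a|, |c| ≤ ‖P‖₁`, and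
`P(½,½) - P(½,-½) = b/2` gives `|b| ≤ 4‖P‖₁`. For `P = 4xy` the bound is attained:
`4|xy| ≤ (|x| + |y|)² ≤ 1`, with equality at `(½,½)`.
-/

/-- Sup norm of `a·x² + b·xy + c·y²` over the unit ball of `ℓ₁²`. -/
noncomputable def supNormOne (a b c : ℝ) : ℝ :=
  sSup {z : ℝ | ∃ x y : ℝ, |x| + |y| ≤ 1 ∧ z = |a * x ^ 2 + b * x * y + c * y ^ 2|}

lemma abs_quadratic_le_of_abs_add_abs_le_one (a b c : ℝ) {x y : ℝ} (hxy : |x| + |y| ≤ 1) :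
    |a * x ^ 2 + b * x * y + c * y ^ 2| ≤ |a| + |b| + |c| := by
  have hx : |x| ≤ 1 := by linarith [abs_nonneg y]
  have hy : |y| ≤ 1 := by linarith [abs_nonneg x]
  have hxy' : |x| * |y| ≤ 1 := mul_le_one₀ hx (abs_nonneg y) hy
  calc |a * x ^ 2 + b * x * y + c * y ^ 2|
      ≤ |a * x ^ 2| + |b * x * y| + |c * y ^ 2| := abs_add_three _ _ _
    _ = |a| * |x| ^ 2 + |b| * (|x| * |y|) + |c| * |y| ^ 2 := by
        simp only [abs_mul, abs_pow, mul_assoc]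
    _ ≤ |a| + |b| + |c| := by
        gcongr
        · exact mul_le_of_le_one_right (abs_nonneg a) (pow_le_one₀ (abs_nonneg x) hx)
        · exact mul_le_of_le_one_right (abs_nonneg b) hxy'
        · exact mul_le_of_le_one_right (abs_nonneg c) (pow_le_one₀ (abs_nonneg y) hy)

lemma abs_quadratic_le_supNormOne (a b c : ℝ) {x y : ℝ} (hxy : |x| + |y| ≤ 1) :
    |a * x ^ 2 + b * x * y + c * y ^ 2| ≤ supNormOne a b c :=
  le_csSup ⟨|a| + |b| + |c|, by
    rintro z ⟨x, y, hxy, rfl⟩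
    exact abs_quadratic_le_of_abs_add_abs_le_one a b c hxy⟩ ⟨x, y, hxy, rfl⟩

lemma supNormOne_le {a b c M : ℝ}
    (h : ∀ x y : ℝ, |x| + |y| ≤ 1 → |a * x ^ 2 + b * x * y + c * y ^ 2| ≤ M) :
    supNormOne a b c ≤ M :=
  csSup_le ⟨_, 0, 0, by norm_num, rfl⟩ fun _ ⟨x, y, hxy, hz⟩ => hz ▸ h x y hxy

lemma abs_left_le_supNormOne (a b c : ℝ) : |a| ≤ supNormOne a b c := by
  simpa using abs_quadratic_le_supNormOne a b c (x := 1) (y := 0) (by norm_num)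

lemma abs_right_le_supNormOne (a b c : ℝ) : |c| ≤ supNormOne a b c := by
  simpa using abs_quadratic_le_supNormOne a b c (x := 0) (y := 1) (by norm_num)

lemma abs_middle_le_four_mul_supNormOne (a b c : ℝ) : |b| ≤ 4 * supNormOne a b c := by
  have hp := abs_quadratic_le_supNormOne a b c (x := 1 / 2) (y := 1 / 2) (by norm_num)
  have hm := abs_quadratic_le_supNormOne a b c (x := 1 / 2) (y := -(1 / 2)) (by norm_num)
  calc |b| = 2 * |(a * (1 / 2) ^ 2 + b * (1 / 2) * (1 / 2) + c * (1 / 2) ^ 2) -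
        (a * (1 / 2) ^ 2 + b * (1 / 2) * (-(1 / 2)) + c * (-(1 / 2)) ^ 2)| := by
          rw [← abs_two, ← abs_mul]; ring_nf
    _ ≤ 2 * (supNormOne a b c + supNormOne a b c) := by
          gcongr; exact (abs_sub _ _).trans (add_le_add hp hm)
    _ = 4 * supNormOne a b c := by ring

lemma supNormOne_four_mul_xy : supNormOne 0 4 0 = 1 := by
  refine le_antisymm (supNormOne_le fun x y hxy => ?_) ?_
  · have h4 : |0 * x ^ 2 + 4 * x * y + 0 * y ^ 2| = 4 * (|x| * |y|) := by
      simp [abs_mul, mul_assoc]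
    rw [h4]
    nlinarith [sq_nonneg (|x| - |y|), abs_nonneg x, abs_nonneg y]
  · have h := abs_quadratic_le_supNormOne 0 4 0 (x := 1 / 2) (y := 1 / 2) (by norm_num)
    norm_num at h
    exact h

theorem stmt6 :
    (∀ a b c : ℝ, max (max |a| |b|) |c| ≤ 4 * supNormOne a b c) ∧
    max (max |(0 : ℝ)| |(4 : ℝ)|) |(0 : ℝ)| = 4 * supNormOne 0 4 0 := by
  refine ⟨fun a b c => ?_, ?_⟩
  · have ha := abs_left_le_supNormOne a b c
    have hc := abs_right_le_supNormOne a b c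
    have hN : 0 ≤ supNormOne a b c := (abs_nonneg a).trans ha
    exact max_le (max_le (by linarith) (abs_middle_le_four_mul_supNormOne a b c)) (by linarith)
  · rw [supNormOne_four_mul_xy]
    norm_num
end
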